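/- arXiv:1102.3975 — 2 statements merged into one kernel-verified Lean document; each statement's English description precedes it below -/
import Mathlib

section
/- Let A be a real symmetric positive semidefinite (n+1)×(n+1) matrix of the block form A = [[1, bᵀ],[b, C]], where b ∈ ℝⁿ and the n×n block C is positive definite. Then 1 − bᵀ C⁻¹ b ≥ λ_min(A), where λ_min(A) is the smallest eigenvalue of A. In statistical terms: if A is the covariance matrix of normalized variables Z, X₁, …, X_n, then Var(Res(Z | {X₁,…,X_n})) ≥ λ_min(A). -/
open scoped Matrix

/-- The smallest eigenvalue of a real symmetric (Hermitian) matrix. -/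
noncomputable def lambdaMin {m : Type*} [Fintype m] [DecidableEq m] (A : Matrix m m ℝ) : ℝ :=
  if hA : A.IsHermitian then ⨅ i, hA.eigenvalues i else 0

/-- The largest eigenvalue of a real symmetric (Hermitian) matrix. -/
noncomputable def lambdaMax {m : Type*} [Fintype m] [DecidableEq m] (A : Matrix m m ℝ) : ℝ :=
  if hA : A.IsHermitian then ⨆ i, hA.eigenvalues i else 0

/-- The principal submatrix of `C` on rows and columns in `S`. -/
def subMat {ι : Type*} (C : Matrix ι ι ℝ) (S : Finset ι) : Matrix S S ℝ :=
  fun i j => C i j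

/-- `R²(S) = b_Sᵀ (C_S)⁻¹ b_S`, the squared multiple correlation. -/
noncomputable def R2 {ι : Type*} [Fintype ι] [DecidableEq ι]
    (C : Matrix ι ι ℝ) (b : ι → ℝ) (S : Finset ι) : ℝ :=
  (fun i : S => b i) ⬝ᵥ (subMat C S)⁻¹ *ᵥ (fun i : S => b i)

/-- `λmin(C,k)`: the smallest eigenvalue of any `k × k` principal submatrix of `C`. -/
noncomputable def lambdaMinK {n : ℕ} (C : Matrix (Fin n) (Fin n) ℝ) (k : ℕ) : ℝ :=
  sInf {x | ∃ S : Finset (Fin n), S.card = k ∧ x = lambdaMin (subMat C S)}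

/-- `λmax(C,k)`: the largest eigenvalue of any `k × k` principal submatrix of `C`. -/
noncomputable def lambdaMaxK {n : ℕ} (C : Matrix (Fin n) (Fin n) ℝ) (k : ℕ) : ℝ :=
  sSup {x | ∃ S : Finset (Fin n), S.card = k ∧ x = lambdaMax (subMat C S)}

/-- `Cov(Res(Z|S), X_m) = b_m - C_{m,S} (C_S)⁻¹ b_S`. -/
noncomputable def resCov {ι : Type*} [Fintype ι] [DecidableEq ι]
    (C : Matrix ι ι ℝ) (b : ι → ℝ) (S : Finset ι) (m : ι) : ℝ :=
  b m - (fun i : S => C m i) ⬝ᵥ ((subMat C S)⁻¹ *ᵥ (fun i : S => b i))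

/-! The test vector `x = (1, -C⁻¹b)` turns the quadratic form of `A` into the Schur complement:
`xᵀ A x = 1 - bᵀ C⁻¹ b`, while `xᵀ x ≥ 1`. Since `λ_min(A) ≥ 0`, the Rayleigh bound
`λ_min(A) · xᵀ x ≤ xᵀ A x` gives the claim. -/

namespace Matrix

open scoped MatrixOrder in
theorem IsHermitian.posSemidef_sub_smul_one {m : Type*} [Fintype m] [DecidableEq m]
    {A : Matrix m m ℝ} (hA : A.IsHermitian) {r : ℝ} (hr : ∀ i, r ≤ hA.eigenvalues i) :
    (A - r • 1).PosSemidef := by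
  have : algebraMap ℝ (Matrix m m ℝ) r ≤ A := by
    rw [algebraMap_le_iff_le_spectrum hA.isSelfAdjoint, hA.spectrum_real_eq_range_eigenvalues]
    rintro _ ⟨i, rfl⟩
    exact hr i
  rwa [le_iff, Algebra.algebraMap_eq_smul_one] at this

theorem mulVec_finCons {R : Type*} [CommRing R] {n : ℕ}
    (A : Matrix (Fin (n + 1)) (Fin (n + 1)) R) (a : R) (w : Fin n → R) :
    A *ᵥ Fin.cons a w =
      Fin.cons (A 0 0 * a + (fun j => A 0 j.succ) ⬝ᵥ w)
        (fun i => A i.succ 0 * a + (A.submatrix Fin.succ Fin.succ *ᵥ w) i) := by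
  ext i
  cases i using Fin.cases <;> simp [mulVec, dotProduct, Fin.sum_univ_succ]

theorem finCons_one_neg_dotProduct_mulVec {R : Type*} [CommRing R] {n : ℕ}
    {A : Matrix (Fin (n + 1)) (Fin (n + 1)) R} (hA : A.IsSymm) {w : Fin n → R}
    (hw : A.submatrix Fin.succ Fin.succ *ᵥ w = fun i => A i.succ 0) :
    Fin.cons 1 (-w) ⬝ᵥ A *ᵥ Fin.cons 1 (-w) = A 0 0 - (fun i => A i.succ 0) ⬝ᵥ w := by
  have hrow : (fun j : Fin n => A 0 j.succ) = fun i => A i.succ 0 :=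
    funext fun j => hA.apply j.succ 0
  rw [mulVec_finCons, mulVec_neg, hw, hrow]
  simp [Fin.sum_univ_succ, dotProduct, sub_eq_add_neg]

end Matrix

theorem lambdaMin_mul_dotProduct_self_le {m : Type*} [Fintype m] [DecidableEq m]
    {A : Matrix m m ℝ} (hA : A.IsHermitian) (x : m → ℝ) :
    lambdaMin A * (x ⬝ᵥ x) ≤ x ⬝ᵥ A *ᵥ x := by
  have hx := (hA.posSemidef_sub_smul_one fun i =>
    ciInf_le (Set.finite_range hA.eigenvalues).bddBelow i).dotProduct_mulVec_nonneg x
  rw [lambdaMin, dif_pos hA]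
  simpa [Matrix.sub_mulVec, Matrix.smul_mulVec] using hx

theorem Matrix.PosSemidef.lambdaMin_nonneg {m : Type*} [Fintype m] [DecidableEq m]
    {A : Matrix m m ℝ} (hA : A.PosSemidef) : 0 ≤ lambdaMin A := by
  rw [lambdaMin, dif_pos hA.1]
  exact Real.iInf_nonneg hA.eigenvalues_nonneg

/-- Residual variance lower bound: for a positive semidefinite matrix
`A = [[1, bᵀ],[b, C]]` (with `A₀₀ = 1` and positive definite lower-right block `C`),
`1 − bᵀ C⁻¹ b ≥ λ_min(A)`. -/
theorem residual_variance_ge_lambdaMin {n : ℕ}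
    (A : Matrix (Fin (n + 1)) (Fin (n + 1)) ℝ) (hA : A.PosSemidef)
    (h00 : A 0 0 = 1) (hC : (A.submatrix Fin.succ Fin.succ).PosDef) :
    lambdaMin A ≤
      1 - (fun i : Fin n => A i.succ 0) ⬝ᵥ
          ((A.submatrix Fin.succ Fin.succ)⁻¹ *ᵥ fun i : Fin n => A i.succ 0) := by
  set C := A.submatrix Fin.succ Fin.succ
  set w := C⁻¹ *ᵥ fun i : Fin n => A i.succ 0
  set x : Fin (n + 1) → ℝ := Fin.cons 1 (-w)
  have hCw : C *ᵥ w = fun i => A i.succ 0 := by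
    rw [Matrix.mulVec_mulVec, Matrix.mul_nonsing_inv C ((C.isUnit_iff_isUnit_det).mp hC.isUnit),
      Matrix.one_mulVec]
  have hx : 1 ≤ x ⬝ᵥ x := by
    have hxx : x ⬝ᵥ x = 1 + w ⬝ᵥ w := by simp [x, dotProduct, Fin.sum_univ_succ]
    rw [hxx]
    exact le_add_of_nonneg_right (Finset.sum_nonneg fun i _ => mul_self_nonneg (w i))
  calc lambdaMin A ≤ lambdaMin A * (x ⬝ᵥ x) := le_mul_of_one_le_right hA.lambdaMin_nonneg hx
    _ ≤ x ⬝ᵥ A *ᵥ x := lambdaMin_mul_dotProduct_self_le hA.1 x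
    _ = _ := by
      rw [Matrix.finCons_one_neg_dotProduct_mulVec (Matrix.isHermitian_iff_isSymm.mp hA.1) hCw, h00]
end

section
/- Let C be a real symmetric positive definite n×n matrix, b ∈ ℝⁿ, and 1 ≤ k ≤ n. Let S ⊆ {1,…,n} with |S| = k be an 'oblivious' set, i.e., |b_i| ≥ |b_j| for every i ∈ S and j ∉ S. Then R²(S) ≥ (λmin(C,k)/λmax(C,k)) · OPT, where OPT = max over subsets T of size k of R²(T). -/
open scoped Matrix

/-! Writing `C_T = U diag(λ) Uᵀ`, the form `v ⬝ (C_T)⁻¹ v = ∑ λᵢ⁻¹ (Uᵀv)ᵢ²` is pinched between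
`‖v‖² / λmax(C_T)` and `‖v‖² / λmin(C_T)`, so `R²(T)` is `‖b_T‖²` up to those eigenvalue factors.
An oblivious `S` maximises `‖b_T‖²` among sets of size `k`, so for an optimal `T`,
`λmin(C,k) R²(T) ≤ ‖b_T‖² ≤ ‖b_S‖² ≤ λmax(C,k) R²(S)`. -/

namespace Matrix

variable {m : Type*} [Fintype m] [DecidableEq m] {A : Matrix m m ℝ}

lemma IsHermitian.dotProduct_cfc_mulVec (hA : A.IsHermitian) (f : ℝ → ℝ) (v : m → ℝ) :
    v ⬝ᵥ cfc f A *ᵥ v =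
      ∑ i, f (hA.eigenvalues i) * ((hA.eigenvectorUnitary : Matrix m m ℝ)ᵀ *ᵥ v) i ^ 2 := by
  rw [hA.cfc_eq, IsHermitian.cfc, Unitary.conjStarAlgAut_apply, star_eq_conjTranspose,
    conjTranspose_eq_transpose_of_trivial, ← mulVec_mulVec, ← mulVec_mulVec, dotProduct_mulVec,
    ← mulVec_transpose]
  simp only [dotProduct, mulVec_diagonal, Function.comp_apply, RCLike.ofReal_real_eq_id, id]
  exact Finset.sum_congr rfl fun i _ => by ring

lemma IsHermitian.dotProduct_self_eq_sum (hA : A.IsHermitian) (v : m → ℝ) :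
    v ⬝ᵥ v = ∑ i, ((hA.eigenvectorUnitary : Matrix m m ℝ)ᵀ *ᵥ v) i ^ 2 := by
  simpa [cfc_one ℝ A hA.isSelfAdjoint] using hA.dotProduct_cfc_mulVec 1 v

lemma PosDef.inv_eq_cfc (hA : A.PosDef) : A⁻¹ = cfc (fun x : ℝ => x⁻¹) A := by
  have hspec : ∀ x ∈ spectrum ℝ A, id x ≠ 0 := by
    rintro x hx rfl
    exact (spectrum.zero_notMem_iff ℝ).mpr hA.isUnit hx
  have h := cfc_inv id A hspec (ha := hA.1.isSelfAdjoint)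
  rw [cfc_id ℝ A hA.1.isSelfAdjoint] at h
  rw [nonsing_inv_eq_ringInverse, ← h]
  rfl

lemma IsHermitian.lambdaMin_le_eigenvalues (hA : A.IsHermitian) (i : m) :
    lambdaMin A ≤ hA.eigenvalues i := by
  rw [lambdaMin, dif_pos hA]
  exact ciInf_le (Set.finite_range _).bddBelow i

lemma IsHermitian.eigenvalues_le_lambdaMax (hA : A.IsHermitian) (i : m) :
    hA.eigenvalues i ≤ lambdaMax A := by
  rw [lambdaMax, dif_pos hA]
  exact le_ciSup (Set.finite_range _).bddAbove i

lemma PosDef.lambdaMax_pos [Nonempty m] (hA : A.PosDef) : 0 < lambdaMax A :=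
  (hA.eigenvalues_pos (Classical.arbitrary m)).trans_le (hA.1.eigenvalues_le_lambdaMax _)

lemma PosDef.lambdaMin_mul_dotProduct_inv_mulVec_le (hA : A.PosDef) (v : m → ℝ) :
    lambdaMin A * (v ⬝ᵥ A⁻¹ *ᵥ v) ≤ v ⬝ᵥ v := by
  rw [hA.inv_eq_cfc, hA.1.dotProduct_cfc_mulVec, hA.1.dotProduct_self_eq_sum, Finset.mul_sum]
  refine Finset.sum_le_sum fun i _ => ?_
  rw [← mul_assoc]
  exact mul_le_of_le_one_left (sq_nonneg _)
    (mul_inv_le_one_of_le₀ (hA.1.lambdaMin_le_eigenvalues i) (hA.eigenvalues_pos i).le)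

lemma PosDef.dotProduct_le_lambdaMax_mul_dotProduct_inv_mulVec (hA : A.PosDef) (v : m → ℝ) :
    v ⬝ᵥ v ≤ lambdaMax A * (v ⬝ᵥ A⁻¹ *ᵥ v) := by
  rw [hA.inv_eq_cfc, hA.1.dotProduct_cfc_mulVec, hA.1.dotProduct_self_eq_sum, Finset.mul_sum]
  refine Finset.sum_le_sum fun i _ => ?_
  rw [← mul_assoc]
  refine le_mul_of_one_le_left (sq_nonneg _) ?_
  rw [le_mul_inv_iff₀ (hA.eigenvalues_pos i), one_mul]
  exact hA.1.eigenvalues_le_lambdaMax i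

end Matrix

theorem Finset.sum_le_sum_of_card_eq_of_forall_le {ι M : Type*} [DecidableEq ι]
    [AddCommMonoid M] [LinearOrder M] [IsOrderedAddMonoid M] {f : ι → M} {S T : Finset ι}
    (hcard : T.card = S.card) (hf : ∀ i ∈ S, ∀ j ∉ S, f j ≤ f i) :
    ∑ j ∈ T, f j ≤ ∑ i ∈ S, f i := by
  rw [← Finset.sum_inter_add_sum_sdiff T S, ← Finset.sum_inter_add_sum_sdiff S T,
    Finset.inter_comm]
  refine add_le_add le_rfl ?_
  have hsdiff : (T \ S).card = (S \ T).card := Finset.card_sdiff_comm hcard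
  obtain hST | hST := (S \ T).eq_empty_or_nonempty
  · rw [hST, Finset.card_empty, Finset.card_eq_zero] at hsdiff
    simp [hST, hsdiff]
  obtain ⟨i₀, hi₀, hmin⟩ := Finset.exists_min_image (S \ T) f hST
  calc ∑ j ∈ T \ S, f j ≤ (T \ S).card • f i₀ :=
        Finset.sum_le_card_nsmul _ _ _ fun j hj =>
          hf i₀ (Finset.mem_sdiff.mp hi₀).1 j (Finset.mem_sdiff.mp hj).2
    _ = (S \ T).card • f i₀ := by rw [hsdiff]
    _ ≤ ∑ i ∈ S \ T, f i := Finset.card_nsmul_le_sum _ _ _ hmin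

lemma subMat_posDef {ι : Type*} {C : Matrix ι ι ℝ} (hC : C.PosDef) (S : Finset ι) :
    (subMat C S).PosDef :=
  hC.submatrix Subtype.val_injective

lemma dotProduct_restrict_self {ι : Type*} (b : ι → ℝ) (S : Finset ι) :
    (fun i : S => b i) ⬝ᵥ (fun i : S => b i) = ∑ i ∈ S, b i ^ 2 := by
  simp only [dotProduct, ← sq]
  exact Finset.sum_coe_sort S (fun i => b i ^ 2)

section R2

variable {ι : Type*} [Fintype ι] [DecidableEq ι] {C : Matrix ι ι ℝ}

lemma R2_nonneg (hC : C.PosDef) (b : ι → ℝ) (S : Finset ι) : 0 ≤ R2 C b S :=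
  (subMat_posDef hC S).inv.posSemidef.dotProduct_mulVec_nonneg _

lemma lambdaMin_mul_R2_le (hC : C.PosDef) (b : ι → ℝ) (S : Finset ι) :
    lambdaMin (subMat C S) * R2 C b S ≤ ∑ i ∈ S, b i ^ 2 :=
  dotProduct_restrict_self b S ▸
    (subMat_posDef hC S).lambdaMin_mul_dotProduct_inv_mulVec_le _

lemma sum_sq_le_lambdaMax_mul_R2 (hC : C.PosDef) (b : ι → ℝ) (S : Finset ι) :
    ∑ i ∈ S, b i ^ 2 ≤ lambdaMax (subMat C S) * R2 C b S :=
  dotProduct_restrict_self b S ▸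
    (subMat_posDef hC S).dotProduct_le_lambdaMax_mul_dotProduct_inv_mulVec _

end R2

section CardEq

variable {n k : ℕ} {S : Finset (Fin n)}

lemma finite_setOf_card_eq {α β : Type*} [Fintype α] (f : Finset α → β) (k : ℕ) :
    {x | ∃ T : Finset α, T.card = k ∧ x = f T}.Finite :=
  (Set.finite_range f).subset fun _ ⟨T, _, hx⟩ => ⟨T, hx.symm⟩

lemma lambdaMinK_le_lambdaMin (C : Matrix (Fin n) (Fin n) ℝ) (hS : S.card = k) :
    lambdaMinK C k ≤ lambdaMin (subMat C S) :=
  csInf_le (finite_setOf_card_eq _ k).bddBelow ⟨S, hS, rfl⟩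

lemma lambdaMax_le_lambdaMaxK (C : Matrix (Fin n) (Fin n) ℝ) (hS : S.card = k) :
    lambdaMax (subMat C S) ≤ lambdaMaxK C k :=
  le_csSup (finite_setOf_card_eq _ k).bddAbove ⟨S, hS, rfl⟩

end CardEq

theorem oblivious_bound_general {n k : ℕ}
    (C : Matrix (Fin n) (Fin n) ℝ) (b : Fin n → ℝ) (hC : C.PosDef)
    (hk1 : 1 ≤ k)
    (S : Finset (Fin n)) (hScard : S.card = k)
    (hobl : ∀ i ∈ S, ∀ j ∉ S, |b j| ≤ |b i|) :
    lambdaMinK C k / lambdaMaxK C k *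
        sSup {x | ∃ T : Finset (Fin n), T.card = k ∧ x = R2 C b T} ≤ R2 C b S := by
  have : Nonempty S := Finset.nonempty_coe_sort.mpr (Finset.card_pos.mp (hScard ▸ hk1))
  have hmax : 0 < lambdaMaxK C k :=
    (subMat_posDef hC S).lambdaMax_pos.trans_le (lambdaMax_le_lambdaMaxK C hScard)
  obtain ⟨T, hT, hOPT⟩ : sSup {x | ∃ T : Finset (Fin n), T.card = k ∧ x = R2 C b T} ∈ _ :=
    Set.Nonempty.csSup_mem ⟨_, S, hScard, rfl⟩ (finite_setOf_card_eq _ k)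
  rw [hOPT, div_mul_eq_mul_div, div_le_iff₀ hmax]
  calc lambdaMinK C k * R2 C b T
      ≤ lambdaMin (subMat C T) * R2 C b T :=
        mul_le_mul_of_nonneg_right (lambdaMinK_le_lambdaMin C hT) (R2_nonneg hC b T)
    _ ≤ ∑ i ∈ T, b i ^ 2 := lambdaMin_mul_R2_le hC b T
    _ ≤ ∑ i ∈ S, b i ^ 2 :=
        Finset.sum_le_sum_of_card_eq_of_forall_le (hT.trans hScard.symm)
          fun i hi j hj => sq_le_sq.mpr (hobl i hi j hj)
    _ ≤ lambdaMax (subMat C S) * R2 C b S := sum_sq_le_lambdaMax_mul_R2 hC b S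
    _ ≤ lambdaMaxK C k * R2 C b S :=
        mul_le_mul_of_nonneg_right (lambdaMax_le_lambdaMaxK C hScard) (R2_nonneg hC b S)
    _ = R2 C b S * lambdaMaxK C k := mul_comm _ _

/-- Oblivious algorithm guarantee: if `S` consists of the `k` indices with the largest
`|b_i|` values, then `R²(S) ≥ (λmin(C,k)/λmax(C,k)) · OPT`. -/
theorem oblivious_bound {n k : ℕ}
    (C : Matrix (Fin n) (Fin n) ℝ) (b : Fin n → ℝ) (hC : C.PosDef)
    (hk1 : 1 ≤ k) (hkn : k ≤ n)
    (S : Finset (Fin n)) (hScard : S.card = k)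
    (hobl : ∀ i ∈ S, ∀ j ∉ S, |b j| ≤ |b i|) :
    lambdaMinK C k / lambdaMaxK C k *
        sSup {x | ∃ T : Finset (Fin n), T.card = k ∧ x = R2 C b T} ≤ R2 C b S :=
  oblivious_bound_general C b hC hk1 S hScard hobl
end
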